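/- arXiv:cs/0306017 — 2 statements merged into one kernel-verified Lean document; each statement's English description precedes it below -/
import Mathlib

section
/- If I and J are interpretations of a program P such that I(p) ≤ J(p) for every atom p, then I ⊑_∞ J. -/
open Ordinal Set

noncomputable section
attribute [local instance] Classical.propDecidable

namespace IVS

/-- Countable ordinals: ordinals below `ω₁`. -/
abbrev Ord1 := {o : Ordinal.{0} // o < ω₁}

theorem zero_lt_omega1 : (0 : Ordinal) < ω₁ := omega_pos 1

theorem succ_lt_omega1 {o : Ordinal} (h : o < ω₁) : o + 1 < ω₁ := by
  have h' := (Cardinal.isSuccLimit_omega 1).succ_lt h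
  rwa [Order.succ_eq_add_one] at h'

/-- zero as a countable ordinal -/
def O0 : Ord1 := ⟨0, zero_lt_omega1⟩

/-- successor on countable ordinals -/
def Ord1.succ (a : Ord1) : Ord1 := ⟨a.1 + 1, succ_lt_omega1 a.2⟩

/-- The truth domain `V`: `F_α < ⋯ < 0 < ⋯ < T_α` realized as a lexicographic sum. -/
abbrev TV := Ord1 ⊕ₗ (Unit ⊕ₗ Ord1ᵒᵈ)

/-- the false value `F_α` -/
def TV.F (a : Ord1) : TV := toLex (Sum.inl a)
/-- the middle value `0` -/
def TV.Z : TV := toLex (Sum.inr (toLex (Sum.inl ())))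
/-- the true value `T_α` -/
def TV.T (a : Ord1) : TV := toLex (Sum.inr (toLex (Sum.inr (OrderDual.toDual a))))

/-- the order of a truth value (`⊤` codes `+∞`, the order of `0`) -/
def ordOf (v : TV) : WithTop Ordinal :=
  match ofLex v with
  | .inl a => (a.1 : Ordinal)
  | .inr b =>
    match ofLex b with
    | .inl _ => ⊤
    | .inr a => ((OrderDual.ofDual a).1 : Ordinal)

/-- negation-as-failure: `¬F_α = T_{α+1}`, `¬T_α = F_{α+1}`, `¬0 = 0`. -/
def negv (v : TV) : TV :=
  match ofLex v with
  | .inl a => TV.T a.succ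
  | .inr b =>
    match ofLex b with
    | .inl _ => TV.Z
    | .inr a => TV.F (OrderDual.ofDual a).succ

/-- Literals of a propositional normal program (atoms are natural numbers). -/
inductive Lit where
  | pos (n : ℕ)
  | neg (n : ℕ)
  | tt
  | ff

/-- A normal program clause: a head atom and a body which is a conjunction of literals. -/
structure Clause where
  head : ℕ
  body : List Lit

/-- A (possibly infinite) propositional normal logic program. -/
abbrev Program := Set Clause

/-- Infinite-valued interpretations. -/
abbrev Interp := ℕ → TV

/-- the interpretation assigning `F₀` to every atom (denoted `∅` in the paper) -/
def botI : Interp := fun _ => TV.F O0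

def evalLit (I : Interp) : Lit → TV
  | .pos n => I n
  | .neg n => negv (I n)
  | .tt => TV.T O0
  | .ff => TV.F O0

/-- value of a body (conjunction evaluated by `min`; empty conjunction is `T₀`) -/
def evalBody (I : Interp) (b : List Lit) : TV :=
  (b.map (evalLit I)).foldr min (TV.T O0)

/-- least upper bound in `V` (well-defined by the lub-existence theorem) -/
def lub (S : Set TV) : TV := if h : ∃ v, IsLUB S v then h.choose else TV.Z

/-- the immediate consequence operator -/
def TP (P : Program) (I : Interp) : Interp :=
  fun p => lub {v | ∃ c ∈ P, c.head = p ∧ evalBody I c.body = v}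

/-- `I` is an (infinite-valued) model of `P` -/
def isModel (P : Program) (I : Interp) : Prop :=
  ∀ c ∈ P, evalBody I c.body ≤ I c.head

/-- the level set `I ∥ v` -/
def level (I : Interp) (v : TV) : Set ℕ := {p | I p = v}

/-- `I =_α J` -/
def eqA (α : Ord1) (I J : Interp) : Prop :=
  ∀ β ≤ α, level I (TV.T β) = level J (TV.T β) ∧ level I (TV.F β) = level J (TV.F β)

/-- `I ⊏_α J` -/
def sqltA (α : Ord1) (I J : Interp) : Prop :=
  (∀ β < α, eqA β I J) ∧
    ((level I (TV.T α) ⊂ level J (TV.T α) ∧ level J (TV.F α) ⊆ level I (TV.F α)) ∨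
     (level I (TV.T α) ⊆ level J (TV.T α) ∧ level J (TV.F α) ⊂ level I (TV.F α)))

/-- `I ⊑_α J` -/
def sqleA (α : Ord1) (I J : Interp) : Prop := eqA α I J ∨ sqltA α I J

/-- `I ⊏_∞ J` -/
def sqltInf (I J : Interp) : Prop := ∃ α : Ord1, sqltA α I J

/-- `I ⊑_∞ J` -/
def sqleInf (I J : Interp) : Prop := I = J ∨ sqltInf I J

/-- the sequence `T_P^n(I)` is an `α`-chain -/
def isChainA (P : Program) (α : Ord1) (I : Interp) : Prop :=
  ∀ n : ℕ, sqleA α ((TP P)^[n] I) ((TP P)^[n + 1] I)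

/-- the interpretation `T_{P,α}^ω(I)` -/
def TPomega (P : Program) (α : Ord1) (I : Interp) : Interp := fun p =>
  if ordOf (I p) < (α.1 : WithTop Ordinal) then I p
  else if ∃ n : ℕ, (TP P)^[n] I p = TV.T α then TV.T α
  else if ∀ n : ℕ, (TP P)^[n] I p = TV.F α then TV.F α
  else TV.F α.succ

/-- `⊔_{β<α} M_β` for a family defined below `α` -/
def sqcupI (α : Ord1) (f : ∀ β : Ordinal, β < α.1 → Interp) : Interp := fun p =>
  if h : ∃ β : Ordinal, ∃ hb : β < α.1, ordOf (f β hb p) = (β : WithTop Ordinal)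
  then f h.choose h.choose_spec.choose p
  else TV.F α

/-- the approximations `M_α` to the minimum model (junk values for `α ≥ ω₁`) -/
def MA (P : Program) (o : Ordinal) : Interp :=
  Ordinal.limitRecOn o
    (TPomega P O0 botI)
    (fun o' ih => if h : o' + 1 < ω₁ then TPomega P ⟨o' + 1, h⟩ ih else ih)
    (fun o' _ ih =>
      if h : o' < ω₁ then TPomega P ⟨o', h⟩ (sqcupI ⟨o', h⟩ ih) else botI)

/-- `M_α` for a countable ordinal `α` -/
def Mα (P : Program) (α : Ord1) : Interp := MA P α.1

/-- the defining property of the depth `δ` of a program -/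
def isDepth (P : Program) (δ : Ord1) : Prop :=
  (level (Mα P δ) (TV.T δ) = ∅ ∧ level (Mα P δ) (TV.F δ) = ∅) ∧
    ∀ β : Ord1, β < δ →
      (level (Mα P β) (TV.T β) ≠ ∅ ∨ level (Mα P β) (TV.F β) ≠ ∅)

/-- the depth of a program -/
def depth (P : Program) : Ord1 :=
  if h : ∃ δ : Ord1, isDepth P δ then h.choose else O0

/-- the minimum model `M_P` -/
def MP (P : Program) : Interp := fun p =>
  if ordOf (Mα P (depth P) p) < ((depth P).1 : WithTop Ordinal)
  then Mα P (depth P) p else TV.Z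

/-- the set of all infinite-valued models of `P` -/
def models (P : Program) : Set Interp := {I | isModel P I}

/-- `M ♯ α`: the part of `M` consisting of values of order `α` -/
def sharp (I : Interp) (α : Ord1) : Set (ℕ × TV) :=
  {pv | I pv.1 = pv.2 ∧ ordOf pv.2 = (α.1 : WithTop Ordinal)}

/-- `⨀^α S = ⋀^α S ∪ ⋁^α S` -/
def odot (α : Ord1) (S : Set Interp) : Set (ℕ × TV) :=
  {pv | (∃ p : ℕ, pv = (p, TV.T α) ∧ ∀ M ∈ S, M p = TV.T α) ∨
        (∃ p : ℕ, pv = (p, TV.F α) ∧ ∃ M ∈ S, M p = TV.F α)}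

/-- the sets `S_α` of the model intersection construction (junk for `α ≥ ω₁`) -/
def SA (P : Program) (o : Ordinal) : Set Interp :=
  Ordinal.limitRecOn o
    {M ∈ models P | sharp M O0 = odot O0 (models P)}
    (fun o' ih =>
      if h : o' + 1 < ω₁ then {M ∈ ih | sharp M ⟨o' + 1, h⟩ = odot ⟨o' + 1, h⟩ ih} else ih)
    (fun o' _ ih =>
      if h : o' < ω₁ then
        {M : Interp | M ∈ (⋂ (b : Ordinal) (hb : b < o'), ih b hb) ∧
          sharp M ⟨o', h⟩ = odot ⟨o', h⟩ (⋂ (b : Ordinal) (hb : b < o'), ih b hb)}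
      else ∅)

/-!
Take the least countable ordinal `α` at which the `T_α`- or `F_α`-level sets of `I` and `J` differ;
it exists unless `I = J`, because every value other than `0` is recorded in a level set. If
`I p = T_α` then `J p = T_β` for some `β ≤ α`, and `β < α` is impossible since the `T_β`-levels of
`I` and `J` agree; dually `J p = F_α` forces `I p = F_α`. So the inclusions at level `α` go the
right way, and one of them is strict, i.e. `I ⊏_α J`.
-/

namespace TV

theorem T_injective : Function.Injective T := fun _ _ h => by simpa [T] using h

theorem F_injective : Function.Injective F := fun _ _ h => by simpa [F] using h

theorem T_le_T {a b : Ord1} : T a ≤ T b ↔ b ≤ a := by simp [T]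

theorem F_le_F {a b : Ord1} : F a ≤ F b ↔ a ≤ b := by simp [F]

theorem F_lt_T (a b : Ord1) : F a < T b := by simp [F, T]

theorem F_lt_Z (a : Ord1) : F a < Z := by simp [F, Z]

theorem Z_lt_T (a : Ord1) : Z < T a := by simp [Z, T]

theorem eq_F_or_eq_Z_or_eq_T (v : TV) : (∃ a, v = F a) ∨ v = Z ∨ ∃ a, v = T a := by
  rcases v with a | b
  · exact Or.inl ⟨a, rfl⟩
  · rcases b with u | a
    · exact Or.inr (Or.inl rfl)
    · exact Or.inr (Or.inr ⟨OrderDual.ofDual a, rfl⟩)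

theorem eq_Z_iff {v : TV} : v = Z ↔ ∀ a, v ≠ T a ∧ v ≠ F a := by
  refine ⟨fun hv a => hv ▸ ⟨(Z_lt_T a).ne, (F_lt_Z a).ne'⟩, fun h => ?_⟩
  rcases eq_F_or_eq_Z_or_eq_T v with ⟨b, rfl⟩ | hv | ⟨b, rfl⟩
  · exact absurd rfl (h b).2
  · exact hv
  · exact absurd rfl (h b).1

theorem eq_T_of_T_le {a : Ord1} {v : TV} (h : T a ≤ v) : ∃ b ≤ a, v = T b := by
  rcases eq_F_or_eq_Z_or_eq_T v with ⟨b, rfl⟩ | rfl | ⟨b, rfl⟩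
  · exact absurd h (F_lt_T b a).not_ge
  · exact absurd h (Z_lt_T a).not_ge
  · exact ⟨b, T_le_T.mp h, rfl⟩

theorem eq_F_of_le_F {a : Ord1} {v : TV} (h : v ≤ F a) : ∃ b ≤ a, v = F b := by
  rcases eq_F_or_eq_Z_or_eq_T v with ⟨b, rfl⟩ | rfl | ⟨b, rfl⟩
  · exact ⟨b, F_le_F.mp h, rfl⟩
  · exact absurd h (F_lt_Z a).not_ge
  · exact absurd h (F_lt_T a b).not_ge

end TV

def levelsAgree (α : Ord1) (I J : Interp) : Prop :=
  level I (TV.T α) = level J (TV.T α) ∧ level I (TV.F α) = level J (TV.F α)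

theorem eq_of_forall_levelsAgree {I J : Interp} (h : ∀ α, levelsAgree α I J) : I = J := by
  have hT (p : ℕ) (a : Ord1) : I p = TV.T a ↔ J p = TV.T a := Set.ext_iff.mp (h a).1 p
  have hF (p : ℕ) (a : Ord1) : I p = TV.F a ↔ J p = TV.F a := Set.ext_iff.mp (h a).2 p
  have hval (p : ℕ) (v : TV) : I p = v ↔ J p = v := by
    rcases TV.eq_F_or_eq_Z_or_eq_T v with ⟨a, rfl⟩ | rfl | ⟨a, rfl⟩
    · exact hF p a
    · simp only [TV.eq_Z_iff, ne_eq, hT, hF]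
    · exact hT p a
  exact funext fun p => ((hval p (I p)).mp rfl).symm

section PointwiseLe

variable {I J : Interp} {α : Ord1}

theorem level_T_subset_of_le (hle : ∀ p, I p ≤ J p)
    (hbelow : ∀ β < α, level I (TV.T β) = level J (TV.T β)) :
    level I (TV.T α) ⊆ level J (TV.T α) := by
  intro p (hp : I p = TV.T α)
  obtain ⟨β, hβα, hJ⟩ := TV.eq_T_of_T_le (hp ▸ hle p)
  obtain rfl | hβα := hβα.eq_or_lt
  · exact hJ
  · have hI : I p = TV.T β := (Set.ext_iff.mp (hbelow β hβα) p).mpr hJ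
    exact absurd (TV.T_injective (hp.symm.trans hI)) hβα.ne'

theorem level_F_subset_of_le (hle : ∀ p, I p ≤ J p)
    (hbelow : ∀ β < α, level I (TV.F β) = level J (TV.F β)) :
    level J (TV.F α) ⊆ level I (TV.F α) := by
  intro p (hp : J p = TV.F α)
  obtain ⟨β, hβα, hI⟩ := TV.eq_F_of_le_F (hp ▸ hle p)
  obtain rfl | hβα := hβα.eq_or_lt
  · exact hI
  · have hJ : J p = TV.F β := (Set.ext_iff.mp (hbelow β hβα) p).mp hI
    exact absurd (TV.F_injective (hp.symm.trans hJ)) hβα.ne'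

theorem sqltA_of_le (hle : ∀ p, I p ≤ J p) (hbelow : ∀ β < α, levelsAgree β I J)
    (hα : ¬ levelsAgree α I J) : sqltA α I J := by
  refine ⟨fun β hβ γ hγ => hbelow γ (hγ.trans_lt hβ), ?_⟩
  have hT := level_T_subset_of_le hle fun β hβ => (hbelow β hβ).1
  have hF := level_F_subset_of_le hle fun β hβ => (hbelow β hβ).2
  by_cases hTeq : level I (TV.T α) = level J (TV.T α)
  · exact Or.inr ⟨hT, hF.ssubset_of_ne fun hFeq => hα ⟨hTeq, hFeq.symm⟩⟩
  · exact Or.inl ⟨hT.ssubset_of_ne hTeq, hF⟩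

end PointwiseLe

/-- Pointwise dominated interpretations are `⊑_∞`-below. -/
theorem sqleInf_of_pointwise_le (I J : Interp) (h : ∀ p : ℕ, I p ≤ J p) :
    sqleInf I J := by
  by_cases hIJ : I = J
  · exact Or.inl hIJ
  have hdiff : {α | ¬ levelsAgree α I J}.Nonempty := by
    by_contra hnone
    exact hIJ (eq_of_forall_levelsAgree fun α => by_contra fun hα => hnone ⟨α, hα⟩)
  obtain ⟨α, hα, hmin⟩ := wellFounded_lt.has_min _ hdiff
  exact Or.inr ⟨α, sqltA_of_le h (fun β hβ => not_not.mp fun hβ' => hmin β hβ' hβ) hα⟩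

end IVS
end
end

section
/- If I is a reasonable interpretation (i.e., I never assigns a value T_α with α a limit ordinal), then T_P(I) is also reasonable; consequently T_P^n(I) is reasonable for all n < ω. -/
open Ordinal Set

noncomputable section
attribute [local instance] Classical.propDecidable

namespace IVS

/-- `I` is reasonable if it never assigns `T_α` with `α` a limit ordinal. -/
def reasonable (I : Interp) : Prop :=
  ∀ (p : ℕ) (α : Ord1), I p = TV.T α → ¬ Order.IsSuccLimit α.1

/-! A value `T_α` is never the supremum of a set that omits it, because `T_{α+1}` is its
immediate predecessor. Hence `T_P(I)(p) = T_α` forces some clause body to evaluate to `T_α`.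
A body value is the minimum of literal values, i.e. one of them or `T_0`, and a literal value is
a value of `I`, a constant `T_0`/`F_0`, or a negation `T_{β+1}`, `F_{β+1}`, `0`: none of these
is `T_α` with `α` a limit. -/

def IsReasonableValue (v : TV) : Prop := ∀ α : Ord1, v = TV.T α → ¬ Order.IsSuccLimit α.1

lemma Ord1.lt_succ (α : Ord1) : α < α.succ := by
  show α.1 < α.1 + 1
  rw [← Order.succ_eq_add_one]
  exact Order.lt_succ α.1

lemma TV.T_injective_s10 : Function.Injective TV.T := by
  intro a b h
  simpa [TV.T] using h

lemma TV.T_le_T_iff {a b : Ord1} : TV.T a ≤ TV.T b ↔ b ≤ a := by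
  simp [TV.T]

lemma TV.T_succ_lt_T (α : Ord1) : TV.T α.succ < TV.T α :=
  lt_of_le_of_ne (TV.T_le_T_iff.2 (Ord1.lt_succ α).le)
    (TV.T_injective_s10.ne (Ord1.lt_succ α).ne')

lemma TV.le_T_succ_of_lt_T {s : TV} {α : Ord1} (h : s < TV.T α) : s ≤ TV.T α.succ := by
  rcases s with a | (u | a)
  · exact Sum.Lex.inl_le_inr _ _
  · exact Sum.Lex.inr_le_inr_iff.2 (Sum.Lex.inl_le_inr _ _)
  · have hlt : α < OrderDual.ofDual a := by
      by_contra hle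
      exact (TV.T_le_T_iff.2 (not_lt.1 hle)).not_gt h
    refine TV.T_le_T_iff.2 ?_
    show α.1 + 1 ≤ (OrderDual.ofDual a).1
    rw [← Order.succ_eq_add_one]
    exact Order.succ_le_of_lt hlt

lemma TV.mem_of_isLUB_T {S : Set TV} {α : Ord1} (h : IsLUB S (TV.T α)) : TV.T α ∈ S := by
  by_contra hα
  have hub : TV.T α.succ ∈ upperBounds S := fun s hs =>
    TV.le_T_succ_of_lt_T ((h.1 hs).lt_of_ne (ne_of_mem_of_not_mem hs hα))
  exact (TV.T_succ_lt_T α).not_ge (h.2 hub)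

lemma mem_of_lub_eq_T {S : Set TV} {α : Ord1} (h : lub S = TV.T α) : TV.T α ∈ S := by
  unfold lub at h
  split_ifs at h with hS
  · exact TV.mem_of_isLUB_T (h ▸ hS.choose_spec)
  · simp [TV.Z, TV.T] at h

lemma isReasonableValue_T_succ (a : Ord1) : IsReasonableValue (TV.T a.succ) := by
  rintro α hα
  rw [← TV.T_injective_s10 hα]
  show ¬ Order.IsSuccLimit (a.1 + 1)
  rw [← Order.succ_eq_add_one]
  exact Order.not_isSuccLimit_succ _

lemma isReasonableValue_T_zero : IsReasonableValue (TV.T O0) := by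
  rintro α hα
  rw [← TV.T_injective_s10 hα]
  exact Ordinal.not_isSuccLimit_zero

lemma isReasonableValue_F (a : Ord1) : IsReasonableValue (TV.F a) := by
  rintro α hα
  simp [TV.F, TV.T] at hα

lemma isReasonableValue_Z : IsReasonableValue TV.Z := by
  rintro α hα
  simp [TV.Z, TV.T] at hα

lemma isReasonableValue_negv (v : TV) : IsReasonableValue (negv v) := by
  rcases v with a | (u | a)
  · exact isReasonableValue_T_succ _
  · exact isReasonableValue_Z
  · exact isReasonableValue_F _

lemma IsReasonableValue.min {v w : TV} (hv : IsReasonableValue v) (hw : IsReasonableValue w) :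
    IsReasonableValue (min v w) := by
  rcases le_total v w with h | h
  · rwa [inf_eq_left.2 h]
  · rwa [inf_eq_right.2 h]

lemma isReasonableValue_evalLit {I : Interp} (hI : reasonable I) (l : Lit) :
    IsReasonableValue (evalLit I l) := by
  cases l with
  | pos n => exact hI n
  | neg n => exact isReasonableValue_negv _
  | tt => exact isReasonableValue_T_zero
  | ff => exact isReasonableValue_F _

lemma isReasonableValue_evalBody {I : Interp} (hI : reasonable I) (b : List Lit) :
    IsReasonableValue (evalBody I b) := by
  induction b with
  | nil => exact isReasonableValue_T_zero
  | cons l b ih => exact (isReasonableValue_evalLit hI l).min ih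

lemma reasonable_TP (P : Program) {I : Interp} (hI : reasonable I) : reasonable (TP P I) := by
  intro p α hα
  obtain ⟨c, -, -, hc⟩ := mem_of_lub_eq_T hα
  exact isReasonableValue_evalBody hI c.body α hc

/-- `T_P` preserves reasonableness; hence all the iterates `T_P^n(I)` are reasonable. -/
theorem TP_preserves_reasonable (P : Program) (I : Interp) (h : reasonable I) :
    reasonable (TP P I) ∧ ∀ n : ℕ, reasonable ((TP P)^[n] I) := by
  refine ⟨reasonable_TP P h, fun n => ?_⟩
  induction n with
  | zero => exact h
  | succ n ih =>
    rw [Function.iterate_succ_apply']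
    exact reasonable_TP P ih

end IVS
end
end
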